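/- At the typical ribosomal error probability r = 10⁻⁴, the channel capacity of the ribosome channel satisfies 4.216 < C(10⁻⁴) ≤ log₂ 21 < 4.3924 bits per use; equivalently, dividing by the 6 bits needed to specify a codon, 0.7027 < C(10⁻⁴)/6 < 0.7321 codons per use. -/

import Mathlib

open Finset

/-- The ribosome channel: probability of output `y` given input codon `x`,
with error probability `r` and genetic code `G`. -/
noncomputable def rib (G : Fin 64 → Fin 21) (r : ℝ) (y : Fin 21) (x : Fin 64) : ℝ :=
  if y = G x then 1 - r else r / 20

/-- Mutual information (in bits) of the ribosome channel at input distribution `q`.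
Note `Real.logb 2 0 = 0`, which realizes the convention `0 · log₂ 0 = 0`. -/
noncomputable def mutualInfo (G : Fin 64 → Fin 21) (r : ℝ) (q : Fin 64 → ℝ) : ℝ :=
  ∑ x : Fin 64, ∑ y : Fin 21,
    q x * rib G r y x *
      Real.logb 2 (rib G r y x / ∑ x' : Fin 64, q x' * rib G r y x')

/-- `q` is a probability distribution on the 64 codons. -/
def IsDist (q : Fin 64 → ℝ) : Prop := (∀ x, 0 ≤ q x) ∧ ∑ x : Fin 64, q x = 1

/-- The channel capacity: supremum of the mutual information over all input distributions. -/
noncomputable def capacity (G : Fin 64 → Fin 21) (r : ℝ) : ℝ :=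
  sSup {c : ℝ | ∃ q : Fin 64 → ℝ, IsDist q ∧ c = mutualInfo G r q}

/-- `G` has the fiber sizes of the standard genetic code: exactly 2 outputs have a
fiber of size 1, 9 of size 2, 2 of size 3, 5 of size 4, and 3 of size 6. -/
def FiberCode (G : Fin 64 → Fin 21) : Prop :=
  ((univ.filter fun y : Fin 21 => (univ.filter fun x : Fin 64 => G x = y).card = 1).card = 2) ∧
  ((univ.filter fun y : Fin 21 => (univ.filter fun x : Fin 64 => G x = y).card = 2).card = 9) ∧
  ((univ.filter fun y : Fin 21 => (univ.filter fun x : Fin 64 => G x = y).card = 3).card = 2) ∧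
  ((univ.filter fun y : Fin 21 => (univ.filter fun x : Fin 64 => G x = y).card = 4).card = 5) ∧
  ((univ.filter fun y : Fin 21 => (univ.filter fun x : Fin 64 => G x = y).card = 6).card = 3)

/-- The lower-bound function `g` of Theorem II.1 (base-2 logarithms; since
`Real.logb 2 0 = 0`, terms of the form `0 · log₂ 0` vanish as intended). -/
noncomputable def g (r : ℝ) : ℝ :=
  (1/64) * (2*(1-r) * Real.logb 2 (1280*(1-r)/(43*r+20))
    + (63*r/10) * Real.logb 2 (64*r/(43*r+20))
    + 18*(1-r) * Real.logb 2 (640*(1-r)/(11*r+20))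
    + (279*r/10) * Real.logb 2 (32*r/(11*r+20))
    + 6*(1-r) * Real.logb 2 (1280*(1-r)/(r+60))
    + (61*r/10) * Real.logb 2 (64*r/(r+60))
    + 20*(1-r) * Real.logb 2 (64*(1-r)/(4-r))
    + 15*r * Real.logb 2 (16*r/(5*(4-r)))
    + 18*(1-r) * Real.logb 2 (640*(1-r)/(60-31*r))
    + (87*r/10) * Real.logb 2 (32*r/(60-31*r)))

/-! For `0 < r < 1` every channel probability is positive, so the mutual information splits
as `∑ q(x) p(y|x) log₂ p(y|x) + H(Y)`: the first sum is `≤ 0`, and Jensen's inequality for the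
concave function `-t log t` gives `H(Y) ≤ log₂ 21`; this bounds the capacity above. Below, the
capacity is at least the mutual information of the uniform input. Under the uniform input the
output `y` has probability `(k (1 - r) + (64 - k) r / 20) / 64`, where `k` is the size of its
fiber, so the mutual information only depends on the fiber sizes and equals the function `g r`
of the paper. The remaining numerical bounds on `log₂` are certified by comparing powers of
integers: `p / q < log₂ (a / b)` as soon as `2 ^ p * b ^ q < a ^ q`. -/

open Real

section LogBounds

variable {a b p q : ℕ}

lemma div_lt_logb_two_div (hb : 0 < b) (hq : 0 < q) (h : 2 ^ p * b ^ q < a ^ q) :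
    (p / q : ℝ) < logb 2 (a / b) := by
  have hpow : (2 : ℝ) ^ p < ((a : ℝ) / b) ^ q := by
    rw [div_pow, lt_div_iff₀ (by positivity)]
    exact_mod_cast h
  have := logb_lt_logb one_lt_two (by positivity) hpow
  rw [logb_pow, logb_pow, logb_self_eq_one one_lt_two, mul_one] at this
  rwa [div_lt_iff₀ (by positivity), mul_comm]

lemma logb_two_div_lt_div (ha : 0 < a) (hb : 0 < b) (hq : 0 < q) (h : a ^ q < 2 ^ p * b ^ q) :
    logb 2 (a / b) < p / q := by
  have hpow : ((a : ℝ) / b) ^ q < 2 ^ p := by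
    rw [div_pow, div_lt_iff₀ (by positivity)]
    exact_mod_cast h
  have := logb_lt_logb one_lt_two (by positivity) hpow
  rw [logb_pow, logb_pow, logb_self_eq_one one_lt_two, mul_one] at this
  rwa [lt_div_iff₀ (by positivity), mul_comm]

lemma neg_div_lt_logb_two_div (ha : 0 < a) (hb : 0 < b) (hq : 0 < q) (h : b ^ q < 2 ^ p * a ^ q) :
    -(p / q : ℝ) < logb 2 (a / b) :=
  calc -(p / q : ℝ) < -logb 2 (b / a) := neg_lt_neg (logb_two_div_lt_div hb ha hq h)
    _ = logb 2 (a / b) := by rw [← logb_inv, inv_div]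

end LogBounds

lemma sum_negMulLog_le_log_card {ι : Type*} [Fintype ι] {Q : ι → ℝ} (h0 : ∀ i, 0 ≤ Q i)
    (h1 : ∑ i, Q i = 1) : ∑ i, negMulLog (Q i) ≤ log (Fintype.card ι) := by
  set n : ℝ := (Fintype.card ι : ℝ)
  have hn : 0 < n := by
    rcases isEmpty_or_nonempty ι with _ | _
    · simp at h1
    · positivity
  have jensen := concaveOn_negMulLog.le_map_sum (t := univ) (w := fun _ => n⁻¹) (p := Q)
    (fun _ _ => by positivity) (by simp [n, hn.ne']) (fun i _ => Set.mem_Ici.mpr (h0 i))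
  simp only [smul_eq_mul, ← mul_sum, h1, mul_one] at jensen
  rw [negMulLog, log_inv, neg_mul_neg] at jensen
  exact (mul_le_mul_iff_of_pos_left (inv_pos.mpr hn)).mp jensen

section Channel

variable {G : Fin 64 → Fin 21} {r : ℝ}

lemma rib_pos (hr0 : 0 < r) (hr1 : r < 1) (y : Fin 21) (x : Fin 64) : 0 < rib G r y x := by
  unfold rib; split_ifs <;> linarith

lemma rib_le_one (hr0 : 0 ≤ r) (hr1 : r ≤ 1) (y : Fin 21) (x : Fin 64) : rib G r y x ≤ 1 := by
  unfold rib; split_ifs <;> linarith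

lemma sum_rib (x : Fin 64) : ∑ y, rib G r y x = 1 := by
  simp only [rib, sum_ite, filter_eq', mem_univ, ↓reduceIte, sum_sub_distrib, sum_const,
    card_singleton, one_smul, filter_ne', card_erase_of_mem, card_univ, Fintype.card_fin,
    Nat.add_one_sub_one, nsmul_eq_mul, Nat.cast_ofNat]
  ring

variable (G r) in
noncomputable def outputDist (q : Fin 64 → ℝ) (y : Fin 21) : ℝ := ∑ x, q x * rib G r y x

lemma mutualInfo_eq_sum_outputDist (q : Fin 64 → ℝ) : mutualInfo G r q
    = ∑ x, ∑ y, q x * rib G r y x * logb 2 (rib G r y x / outputDist G r q y) :=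
  rfl

lemma outputDist_pos (hr0 : 0 < r) (hr1 : r < 1) {q : Fin 64 → ℝ} (hq : IsDist q) (y : Fin 21) :
    0 < outputDist G r q y := by
  obtain ⟨x, hx⟩ : ∃ x, 0 < q x := by
    by_contra! h
    linarith [hq.2, sum_nonpos fun x (_ : x ∈ univ) => h x]
  exact sum_pos' (fun x _ => mul_nonneg (hq.1 x) (rib_pos hr0 hr1 y x).le)
    ⟨x, mem_univ x, mul_pos hx (rib_pos hr0 hr1 y x)⟩

lemma sum_outputDist {q : Fin 64 → ℝ} (hq : IsDist q) : ∑ y, outputDist G r q y = 1 := by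
  simp only [outputDist]
  rw [sum_comm]
  simp only [← mul_sum, sum_rib, mul_one, hq.2]

lemma mutualInfo_eq_add_negMulLog (hr0 : 0 < r) (hr1 : r < 1) {q : Fin 64 → ℝ} (hq : IsDist q) :
    mutualInfo G r q = ∑ x, ∑ y, q x * rib G r y x * logb 2 (rib G r y x)
      + (∑ y, negMulLog (outputDist G r q y)) / log 2 := by
  have hsplit : ∀ x y, q x * rib G r y x * logb 2 (rib G r y x / outputDist G r q y)
      = q x * rib G r y x * logb 2 (rib G r y x)
        - q x * rib G r y x * logb 2 (outputDist G r q y) := fun x y => by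
    rw [logb_div (rib_pos hr0 hr1 y x).ne' (outputDist_pos hr0 hr1 hq y).ne']
    ring
  have hentropy : ∑ x, ∑ y, q x * rib G r y x * logb 2 (outputDist G r q y)
      = -(∑ y, negMulLog (outputDist G r q y)) / log 2 := by
    rw [sum_comm]
    simp only [← sum_mul, negMulLog, logb, sum_div, ← sum_neg_distrib]
    exact sum_congr rfl fun y _ => by simp only [outputDist]; ring
  rw [mutualInfo_eq_sum_outputDist]
  simp only [hsplit, sum_sub_distrib, hentropy]
  ring

lemma mutualInfo_le_logb_two_twentyOne (hr0 : 0 < r) (hr1 : r < 1) {q : Fin 64 → ℝ}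
    (hq : IsDist q) : mutualInfo G r q ≤ logb 2 21 := by
  have hnoise : ∑ x, ∑ y, q x * rib G r y x * logb 2 (rib G r y x) ≤ 0 :=
    sum_nonpos fun x _ => sum_nonpos fun y _ =>
      mul_nonpos_of_nonneg_of_nonpos (mul_nonneg (hq.1 x) (rib_pos hr0 hr1 y x).le)
        (logb_nonpos one_lt_two (rib_pos hr0 hr1 y x).le (rib_le_one hr0.le hr1.le y x))
  have hentropy : ∑ y, negMulLog (outputDist G r q y) ≤ log 21 := by
    simpa using sum_negMulLog_le_log_card (fun y => (outputDist_pos hr0 hr1 hq y).le)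
      (sum_outputDist hq)
  rw [mutualInfo_eq_add_negMulLog hr0 hr1 hq, logb]
  have := div_le_div_of_nonneg_right hentropy (log_pos one_lt_two).le
  linarith

lemma mutualInfo_le_capacity (hr0 : 0 < r) (hr1 : r < 1) {q : Fin 64 → ℝ} (hq : IsDist q) :
    mutualInfo G r q ≤ capacity G r :=
  le_csSup ⟨logb 2 21, by
    rintro _ ⟨q', hq', rfl⟩
    exact mutualInfo_le_logb_two_twentyOne hr0 hr1 hq'⟩ ⟨q, hq, rfl⟩

variable (G) in
lemma capacity_le_logb_two_twentyOne (hr0 : 0 < r) (hr1 : r < 1) : capacity G r ≤ logb 2 21 :=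
  Real.sSup_le (by rintro _ ⟨q, hq, rfl⟩; exact mutualInfo_le_logb_two_twentyOne hr0 hr1 hq)
    (logb_nonneg one_lt_two (by norm_num))

end Channel

def fiberCard (G : Fin 64 → Fin 21) (y : Fin 21) : ℕ :=
  (univ.filter fun x : Fin 64 => G x = y).card

namespace FiberCode

variable {G : Fin 64 → Fin 21}

lemma card_fiberCard_eq (hG : FiberCode G) :
    #{y | fiberCard G y = 1} = 2 ∧ #{y | fiberCard G y = 2} = 9 ∧
      #{y | fiberCard G y = 3} = 2 ∧ #{y | fiberCard G y = 4} = 5 ∧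
      #{y | fiberCard G y = 6} = 3 :=
  hG

lemma fiberCard_mem (hG : FiberCode G) (y : Fin 21) :
    fiberCard G y ∈ ({1, 2, 3, 4, 6} : Finset ℕ) := by
  obtain ⟨h1, h2, h3, h4, h6⟩ := hG.card_fiberCard_eq
  set t : Finset ℕ := {1, 2, 3, 4, 6}
  have hfiber : ∀ k ∈ t,
      ((univ.filter fun y => fiberCard G y ∈ t).filter fun y => fiberCard G y = k)
        = univ.filter fun y => fiberCard G y = k := fun k hk => by
    rw [filter_filter]
    exact filter_congr fun y _ => ⟨And.right, fun h => ⟨h ▸ hk, h⟩⟩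
  have hcard : #{y | fiberCard G y ∈ t} = 21 := by
    rw [card_eq_sum_card_fiberwise (s := {y | fiberCard G y ∈ t}) (t := t) fun y hy =>
      (mem_filter.mp hy).2, sum_congr rfl fun k hk => congrArg card (hfiber k hk)]
    simp [t, h1, h2, h3, h4, h6]
  have hy : y ∈ univ.filter fun y => fiberCard G y ∈ t := by
    rw [eq_univ_of_card _ hcard]
    exact mem_univ y
  exact (mem_filter.mp hy).2

lemma sum_comp_fiberCard (hG : FiberCode G) {M : Type*} [AddCommMonoid M] (f : ℕ → M) :
    ∑ y, f (fiberCard G y) = 2 • f 1 + 9 • f 2 + 2 • f 3 + 5 • f 4 + 3 • f 6 := by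
  obtain ⟨h1, h2, h3, h4, h6⟩ := hG.card_fiberCard_eq
  rw [← sum_fiberwise_of_maps_to (fun y _ => hG.fiberCard_mem y)]
  have hconst : ∀ k, ∑ y with fiberCard G y = k, f (fiberCard G y)
      = #{y | fiberCard G y = k} • f k :=
    fun k => by rw [sum_congr rfl fun y hy => by rw [(mem_filter.mp hy).2], sum_const]
  simp [hconst, h1, h2, h3, h4, h6, add_assoc]

end FiberCode

section UniformInput

variable {G : Fin 64 → Fin 21} {r : ℝ}

lemma sum_comp_rib (f : ℝ → ℝ) (y : Fin 21) :
    ∑ x, f (rib G r y x) = fiberCard G y * f (1 - r) + (64 - fiberCard G y) * f (r / 20) := by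
  have hcompl : (fiberCard G y : ℝ) + #{x | ¬G x = y} = 64 := by
    exact_mod_cast card_filter_add_card_filter_not (s := univ) (fun x => G x = y)
  unfold fiberCard at hcompl ⊢
  simp only [rib, apply_ite f, sum_ite, sum_const, nsmul_eq_mul, eq_comm (a := y)]
  linear_combination f (r / 20) * hcompl

noncomputable def uniformOutputProb (r : ℝ) (k : ℕ) : ℝ :=
  (k * (1 - r) + (64 - k) * (r / 20)) / 64

noncomputable def uniformInfoTerm (r : ℝ) (k : ℕ) : ℝ :=
  k * (1 / 64 * (1 - r) * logb 2 ((1 - r) / uniformOutputProb r k))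
    + (64 - k) * (1 / 64 * (r / 20) * logb 2 (r / 20 / uniformOutputProb r k))

lemma isDist_uniform : IsDist fun _ => 1 / 64 :=
  ⟨fun _ => by norm_num, by simp⟩

lemma outputDist_uniform (y : Fin 21) :
    outputDist G r (fun _ => 1 / 64) y = uniformOutputProb r (fiberCard G y) := by
  rw [outputDist, sum_comp_rib (fun w => 1 / 64 * w), uniformOutputProb]
  ring

lemma mutualInfo_uniform :
    mutualInfo G r (fun _ => 1 / 64) = ∑ y, uniformInfoTerm r (fiberCard G y) := by
  rw [mutualInfo_eq_sum_outputDist, sum_comm]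
  refine sum_congr rfl fun y _ => ?_
  rw [outputDist_uniform]
  exact sum_comp_rib (fun w => 1 / 64 * w * logb 2 (w / uniformOutputProb r (fiberCard G y))) y

lemma uniformOutputProb_pos (hr0 : 0 ≤ r) (hr1 : r ≤ 1) {k : ℕ} (hk0 : 0 < k) (hk : k < 64) :
    0 < uniformOutputProb r k := by
  have : (1 : ℝ) ≤ k := by exact_mod_cast hk0
  have : (k : ℝ) < 64 := by exact_mod_cast hk
  unfold uniformOutputProb
  nlinarith

end UniformInput

lemma g_eq_sum_uniformInfoTerm {r : ℝ} (hr0 : 0 ≤ r) (hr1 : r ≤ 1) :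
    g r = 2 * uniformInfoTerm r 1 + 9 * uniformInfoTerm r 2 + 2 * uniformInfoTerm r 3
      + 5 * uniformInfoTerm r 4 + 3 * uniformInfoTerm r 6 := by
  have h1 := (uniformOutputProb_pos hr0 hr1 (k := 1) (by norm_num) (by norm_num)).ne'
  have h2 := (uniformOutputProb_pos hr0 hr1 (k := 2) (by norm_num) (by norm_num)).ne'
  have h3 := (uniformOutputProb_pos hr0 hr1 (k := 3) (by norm_num) (by norm_num)).ne'
  have h4 := (uniformOutputProb_pos hr0 hr1 (k := 4) (by norm_num) (by norm_num)).ne'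
  have h6 := (uniformOutputProb_pos hr0 hr1 (k := 6) (by norm_num) (by norm_num)).ne'
  have d1 : 43 * r + 20 ≠ 0 := by linarith
  have d2 : 11 * r + 20 ≠ 0 := by linarith
  have d3 : r + 60 ≠ 0 := by linarith
  have d4 : 4 - r ≠ 0 := by linarith
  have d4' : 5 * (4 - r) ≠ 0 := by linarith
  have d6 : 60 - 31 * r ≠ 0 := by linarith
  simp only [uniformInfoTerm]
  rw [g, show (1 - r) / uniformOutputProb r 1 = 1280 * (1 - r) / (43 * r + 20) by
      rw [div_eq_div_iff h1 d1, uniformOutputProb]; ring,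
    show r / 20 / uniformOutputProb r 1 = 64 * r / (43 * r + 20) by
      rw [div_eq_div_iff h1 d1, uniformOutputProb]; ring,
    show (1 - r) / uniformOutputProb r 2 = 640 * (1 - r) / (11 * r + 20) by
      rw [div_eq_div_iff h2 d2, uniformOutputProb]; ring,
    show r / 20 / uniformOutputProb r 2 = 32 * r / (11 * r + 20) by
      rw [div_eq_div_iff h2 d2, uniformOutputProb]; ring,
    show (1 - r) / uniformOutputProb r 3 = 1280 * (1 - r) / (r + 60) by
      rw [div_eq_div_iff h3 d3, uniformOutputProb]; ring,
    show r / 20 / uniformOutputProb r 3 = 64 * r / (r + 60) by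
      rw [div_eq_div_iff h3 d3, uniformOutputProb]; ring,
    show (1 - r) / uniformOutputProb r 4 = 64 * (1 - r) / (4 - r) by
      rw [div_eq_div_iff h4 d4, uniformOutputProb]; ring,
    show r / 20 / uniformOutputProb r 4 = 16 * r / (5 * (4 - r)) by
      rw [div_eq_div_iff h4 d4', uniformOutputProb]; ring,
    show (1 - r) / uniformOutputProb r 6 = 640 * (1 - r) / (60 - 31 * r) by
      rw [div_eq_div_iff h6 d6, uniformOutputProb]; ring,
    show r / 20 / uniformOutputProb r 6 = 32 * r / (60 - 31 * r) by
      rw [div_eq_div_iff h6 d6, uniformOutputProb]; ring]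
  push_cast
  ring

lemma g_le_capacity {G : Fin 64 → Fin 21} (hG : FiberCode G) {r : ℝ} (hr0 : 0 < r)
    (hr1 : r < 1) : g r ≤ capacity G r := by
  have hg : g r = mutualInfo G r fun _ => 1 / 64 := by
    rw [mutualInfo_uniform, hG.sum_comp_fiberCard, g_eq_sum_uniformInfoTerm hr0.le hr1.le]
    simp only [nsmul_eq_mul, Nat.cast_ofNat]
  exact hg ▸ mutualInfo_le_capacity hr0 hr1 isDist_uniform

lemma logb_two_twentyOne_lt : logb 2 21 < 4.3924 := by
  have h := logb_two_div_lt_div (a := 21) (b := 1) (p := 918) (q := 209) (by norm_num) (by norm_num)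
    (by norm_num) (by decide +kernel)
  norm_num at h
  linarith

-- `4.2162` rather than `4.216`: the rate bound `0.7027 < C / 6` needs `C > 6 · 0.7027`.
lemma lt_g_typical_error : (4.2162 : ℝ) < g (1 / 10000) := by
  have hg : g (1 / 10000) = 1 / 64 * (9999 / 5000 * logb 2 (1422080 / 22227)
      + 63 / 100000 * logb 2 (64 / 200043) + 89991 / 5000 * logb 2 (6399360 / 200011)
      + 279 / 100000 * logb 2 (32 / 200011) + 29997 / 5000 * logb 2 (12798720 / 600001)
      + 61 / 100000 * logb 2 (64 / 600001) + 9999 / 500 * logb 2 (213312 / 13333)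
      + 3 / 2000 * logb 2 (16 / 199995) + 89991 / 5000 * logb 2 (6399360 / 599969)
      + 87 / 100000 * logb 2 (32 / 599969)) := by
    norm_num [g]
  have h1 := div_lt_logb_two_div (a := 1422080) (b := 22227) (p := 12647) (q := 2108)
    (by norm_num) (by norm_num) (by decide +kernel)
  have h2 := div_lt_logb_two_div (a := 6399360) (b := 200011) (p := 20524) (q := 4105)
    (by norm_num) (by norm_num) (by decide +kernel)
  have h3 := div_lt_logb_two_div (a := 12798720) (b := 600001) (p := 2256) (q := 511)
    (by norm_num) (by norm_num) (by decide +kernel)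
  have h4 := div_lt_logb_two_div (a := 213312) (b := 13333) (p := 31199) (q := 7800)
    (by norm_num) (by norm_num) (by decide +kernel)
  have h6 := div_lt_logb_two_div (a := 6399360) (b := 599969) (p := 502) (q := 147)
    (by norm_num) (by norm_num) (by decide +kernel)
  have h1' := neg_div_lt_logb_two_div (a := 64) (b := 200043) (p := 209) (q := 18)
    (by norm_num) (by norm_num) (by norm_num) (by decide +kernel)
  have h2' := neg_div_lt_logb_two_div (a := 32) (b := 200011) (p := 227) (q := 18)
    (by norm_num) (by norm_num) (by norm_num) (by decide +kernel)
  have h3' := neg_div_lt_logb_two_div (a := 64) (b := 600001) (p := 541) (q := 41)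
    (by norm_num) (by norm_num) (by norm_num) (by decide +kernel)
  have h4' := neg_div_lt_logb_two_div (a := 16) (b := 199995) (p := 245) (q := 18)
    (by norm_num) (by norm_num) (by norm_num) (by decide +kernel)
  have h6' := neg_div_lt_logb_two_div (a := 32) (b := 599969) (p := 582) (q := 41)
    (by norm_num) (by norm_num) (by norm_num) (by decide +kernel)
  push_cast at h1 h2 h3 h4 h6 h1' h2' h3' h4' h6'
  rw [hg]
  linarith

/-- At the typical error probability `r = 10⁻⁴`:
`4.216 < C(10⁻⁴) ≤ log₂ 21 < 4.3924` bits per use; equivalently, dividing by the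
6 bits per codon, `0.7027 < C(10⁻⁴)/6 < 0.7321` codons per use. -/
theorem ribosome_capacity_at_typical_error (G : Fin 64 → Fin 21) (hG : FiberCode G) :
    ((4.216 : ℝ) < capacity G (1 / 10000) ∧
        capacity G (1 / 10000) ≤ Real.logb 2 21 ∧
        Real.logb 2 21 < (4.3924 : ℝ)) ∧
      ((0.7027 : ℝ) < capacity G (1 / 10000) / 6 ∧
        capacity G (1 / 10000) / 6 < (0.7321 : ℝ)) := by
  have hr0 : (0 : ℝ) < 1 / 10000 := by norm_num
  have hr1 : (1 : ℝ) / 10000 < 1 := by norm_num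
  have hlower := lt_g_typical_error.trans_le (g_le_capacity hG hr0 hr1)
  have hupper := capacity_le_logb_two_twentyOne G hr0 hr1
  have hlog := logb_two_twentyOne_lt
  norm_num at hlower hlog ⊢
  refine ⟨⟨by linarith, hupper, hlog⟩, by linarith, by linarith⟩
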